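/- arXiv:2205.11878 — 2 statements merged into one kernel-verified Lean document; each statement's English description precedes it below -/
import Mathlib

section
/- Let n and f be natural numbers with f ≥ 1 and n ≥ 3f + 1, and let Q ∈ (0,1) be a real number. Let w_1,…,w_n be real numbers in [0,1] such that w_i = 1 for all i in some set S ⊆ {1,…,n} with |S| ≥ n − f. Let T_1,…,T_n be independent random variables, each uniformly distributed on [0,1], and set X_i = w_i·T_i. If r = 3 + ⌈log₂(n) + log₂(1/Q)⌉ and ε = 2^{−r}, then the probability that there exist distinct indices i ≠ j with X_j = max_{1≤k≤n} X_k and X_i ≥ X_j − 2ε is at most Q. -/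
/-!
Union bound over the index `i` of the runner-up: the event forces `w i * T i` into the window
`[M - 2ε, M]`, where `M` is the maximum of the other `w k * T k`. Since `T i` is uniform and
independent of `M`, this has conditional probability at most `2ε / w i`, and it is impossible
unless `M ≤ w i + 2ε`, because `w i * T i ≤ w i`. Among the `≥ n - f - 1 ≥ 2` indices `k ≠ i`
with `w k = 1` pick two, `a` and `b`; then `M ≤ w i + 2ε` forces `T a, T b ≤ w i + 2ε`, which has
probability at most `(w i + 2ε)²`. The product of the two bounds is at most `8ε` (when
`w i ≤ 2ε` the second bound alone suffices), and the choice of `r` makes `8 n ε ≤ Q`.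
-/

open MeasureTheory ProbabilityTheory Set
open scoped ENNReal

instance : IsProbabilityMeasure (volume.restrict (Icc (0 : ℝ) 1)) := ⟨by simp⟩

lemma volume_restrict_Icc_Iic_le (c : ℝ) :
    volume.restrict (Icc (0 : ℝ) 1) (Iic c) ≤ ENNReal.ofReal c := by
  rw [Measure.restrict_apply measurableSet_Iic]
  calc volume (Iic c ∩ Icc 0 1) ≤ volume (Icc 0 c) :=
        measure_mono fun t ⟨htc, ht0, _⟩ => ⟨ht0, htc⟩
    _ = ENNReal.ofReal c := by rw [Real.volume_Icc, sub_zero]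

lemma volume_restrict_Icc_sandwich_le {w : ℝ} (hw : 0 < w) (δ y : ℝ) :
    volume.restrict (Icc (0 : ℝ) 1) {t | y - δ ≤ w * t ∧ w * t ≤ y} ≤ ENNReal.ofReal (δ / w) :=
  calc _ ≤ volume {t | y - δ ≤ w * t ∧ w * t ≤ y} := Measure.restrict_le_self _
    _ = volume (Icc ((y - δ) / w) (y / w)) := by
        congr 1; ext t; simp [div_le_iff₀ hw, le_div_iff₀ hw, mul_comm]
    _ = ENNReal.ofReal (δ / w) := by rw [Real.volume_Icc]; congr 1; field_simp; ring

section Independent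

variable {Ω : Type*} [MeasurableSpace Ω] {μ : Measure Ω} {X Y : Ω → ℝ}

lemma measure_le_and_le_le_of_indepFun (hX : Measurable X) (hY : Measurable Y)
    (hXY : IndepFun X Y μ) (hXlaw : μ.map X = volume.restrict (Icc 0 1))
    (hYlaw : μ.map Y = volume.restrict (Icc 0 1)) (c : ℝ) :
    μ {ω | X ω ≤ c ∧ Y ω ≤ c} ≤ ENNReal.ofReal c * ENNReal.ofReal c := by
  have hlaw : ∀ Z : Ω → ℝ, Measurable Z → μ.map Z = volume.restrict (Icc 0 1) →
      μ (Z ⁻¹' Iic c) ≤ ENNReal.ofReal c := fun Z hZ hZlaw => by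
    rw [← Measure.map_apply hZ measurableSet_Iic, hZlaw]
    exact volume_restrict_Icc_Iic_le c
  calc μ {ω | X ω ≤ c ∧ Y ω ≤ c} = μ (X ⁻¹' Iic c) * μ (Y ⁻¹' Iic c) :=
        hXY.measure_inter_preimage_eq_mul _ _ measurableSet_Iic measurableSet_Iic
    _ ≤ _ := mul_le_mul' (hlaw X hX hXlaw) (hlaw Y hY hYlaw)

lemma measure_sandwich_le_of_indepFun [IsFiniteMeasure μ] (hX : Measurable X) (hY : Measurable Y)
    (hXY : IndepFun X Y μ) (hXlaw : μ.map X = volume.restrict (Icc 0 1)) {w δ : ℝ} (hw : 0 ≤ w)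
    {c : ℝ≥0∞} (hc : ∀ y, volume.restrict (Icc 0 1) {t | y - δ ≤ w * t ∧ w * t ≤ y} ≤ c) :
    μ {ω | Y ω - δ ≤ w * X ω ∧ w * X ω ≤ Y ω} ≤ c * μ {ω | Y ω ≤ w + δ} := by
  set B : Set (ℝ × ℝ) := {p | p.2 - δ ≤ w * p.1 ∧ w * p.1 ≤ p.2}
  have hB : MeasurableSet B :=
    (measurableSet_le (f := fun p : ℝ × ℝ => p.2 - δ) (by fun_prop) (by fun_prop)).inter
      (measurableSet_le (f := fun p : ℝ × ℝ => w * p.1) (by fun_prop) (by fun_prop))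
  have hslice : ∀ y, volume.restrict (Icc 0 1) ((fun t => (t, y)) ⁻¹' B)
      ≤ (Iic (w + δ)).indicator (fun _ => c) y := by
    intro y
    by_cases hy : y ≤ w + δ
    · rw [indicator_of_mem (show y ∈ Iic (w + δ) from hy)]; exact hc y
    · have hempty : (fun t => (t, y)) ⁻¹' B ∩ Icc 0 1 = ∅ := by
        refine eq_empty_of_forall_notMem fun t ⟨⟨hlow, _⟩, _, ht1⟩ => hy ?_
        nlinarith
      rw [Measure.restrict_apply (hB.preimage measurable_prodMk_right), hempty, measure_empty]
      exact zero_le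
  calc μ {ω | Y ω - δ ≤ w * X ω ∧ w * X ω ≤ Y ω}
      = (μ.map fun ω => (X ω, Y ω)) B := by
        rw [Measure.map_apply (hX.prodMk hY) hB]; rfl
    _ = ∫⁻ y, volume.restrict (Icc 0 1) ((fun t => (t, y)) ⁻¹' B) ∂(μ.map Y) := by
        rw [(indepFun_iff_map_prod_eq_prod_map_map hX.aemeasurable hY.aemeasurable).mp hXY,
          hXlaw, Measure.prod_apply_symm hB]
    _ ≤ ∫⁻ y, (Iic (w + δ)).indicator (fun _ => c) y ∂(μ.map Y) := lintegral_mono hslice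
    _ = c * μ {ω | Y ω ≤ w + δ} := by
        rw [lintegral_indicator_const measurableSet_Iic, Measure.map_apply hY measurableSet_Iic]
        rfl

end Independent

lemma le_two_zpow_ceil_logb {x : ℝ} (hx : 0 < x) : x ≤ 2 ^ ⌈Real.logb 2 x⌉ :=
  calc x = 2 ^ Real.logb 2 x := (Real.rpow_logb two_pos one_lt_two.ne' hx).symm
    _ ≤ 2 ^ (⌈Real.logb 2 x⌉ : ℝ) := Real.rpow_le_rpow_of_exponent_le one_le_two (Int.le_ceil _)
    _ = 2 ^ ⌈Real.logb 2 x⌉ := Real.rpow_intCast _ _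

lemma eight_mul_mul_two_zpow_neg_le {n Q : ℝ} (hn : 0 < n) (hQ : 0 < Q) :
    8 * n * (2 : ℝ) ^ (-(3 + ⌈Real.logb 2 n + Real.logb 2 (1 / Q)⌉)) ≤ Q := by
  rw [← Real.logb_mul hn.ne' (by positivity), ← div_eq_mul_one_div, neg_add,
    zpow_add₀ two_ne_zero, zpow_neg, zpow_neg]
  have h := le_two_zpow_ceil_logb (div_pos hn hQ)
  have hpos : (0 : ℝ) < 2 ^ ⌈Real.logb 2 (n / Q)⌉ := zpow_pos two_pos _
  rw [div_le_iff₀ hQ] at h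
  calc _ = n / 2 ^ ⌈Real.logb 2 (n / Q)⌉ := by norm_num; ring
    _ ≤ Q := by rw [div_le_iff₀ hpos]; linarith

section MaxExcept

variable {ι : Type*} [Fintype ι] [DecidableEq ι]

/-- Takes the junk value `0` when `i` is the only index. -/
noncomputable def maxExcept (x : ι → ℝ) (i : ι) : ℝ :=
  ⨆ k : ↥(Finset.univ.erase i), x k

lemma le_maxExcept (x : ι → ℝ) {i k : ι} (hki : k ≠ i) : x k ≤ maxExcept x i :=
  le_ciSup (f := fun k : ↥(Finset.univ.erase i) => x k) (Finite.bddAbove_range _)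
    ⟨k, by simpa using hki⟩

lemma maxExcept_eq_of_forall_le {x : ι → ℝ} {i j : ι} (hji : j ≠ i) (hmax : ∀ k, x k ≤ x j) :
    maxExcept x i = x j :=
  have : Nonempty ↥(Finset.univ.erase i) := ⟨⟨j, by simpa using hji⟩⟩
  le_antisymm (ciSup_le fun k => hmax k) (le_maxExcept x hji)

lemma exists_sandwich_maxExcept {x : ι → ℝ} {δ : ℝ}
    (h : ∃ i j, i ≠ j ∧ (∀ k, x k ≤ x j) ∧ x j - δ ≤ x i) :
    ∃ i, maxExcept x i - δ ≤ x i ∧ x i ≤ maxExcept x i := by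
  obtain ⟨i, j, hij, hmax, hnear⟩ := h
  refine ⟨i, ?_, ?_⟩ <;> rw [maxExcept_eq_of_forall_le (Ne.symm hij) hmax]
  exacts [hnear, hmax i]

lemma measure_sandwich_maxExcept_le {Ω : Type*} [MeasurableSpace Ω] {μ : Measure Ω}
    [IsProbabilityMeasure μ] {T : ι → Ω → ℝ} (hTmeas : ∀ i, Measurable (T i))
    (hTindep : iIndepFun T μ) (hTunif : ∀ i, μ.map (T i) = volume.restrict (Icc 0 1))
    {w : ι → ℝ} (hw : ∀ i, w i ∈ Icc 0 1) {i a b : ι} (hai : a ≠ i) (hbi : b ≠ i) (hab : a ≠ b)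
    (ha : w a = 1) (hb : w b = 1) {ε : ℝ} (hε0 : 0 < ε) (hε : ε ≤ 1 / 2) :
    μ {ω | maxExcept (fun k => w k * T k ω) i - 2 * ε ≤ w i * T i ω ∧
        w i * T i ω ≤ maxExcept (fun k => w k * T k ω) i} ≤ ENNReal.ofReal (8 * ε) := by
  set Y : Ω → ℝ := fun ω => maxExcept (fun k => w k * T k ω) i
  have hY : Measurable Y := Measurable.iSup fun k => (hTmeas k).const_mul _
  have hXY : IndepFun (T i) Y μ := by
    have hφ : Measurable fun v : (↥({i} : Finset ι) → ℝ) => v ⟨i, Finset.mem_singleton_self i⟩ :=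
      measurable_pi_apply _
    have hψ : Measurable fun v : (↥(Finset.univ.erase i) → ℝ) =>
      ⨆ k : ↥(Finset.univ.erase i), w k * v k :=
      Measurable.iSup fun k => (measurable_pi_apply k).const_mul _
    exact (hTindep.indepFun_finset {i} (Finset.univ.erase i) (by simp) hTmeas).comp hφ hψ
  set W := w i + 2 * ε
  have hYW : μ {ω | Y ω ≤ W} ≤ ENNReal.ofReal W * ENNReal.ofReal W := by
    have hle : ∀ {c} ω, c ≠ i → w c = 1 → Y ω ≤ W → T c ω ≤ W := fun ω hci hc hω =>
      calc T _ ω = w _ * T _ ω := by rw [hc, one_mul]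
        _ ≤ Y ω := le_maxExcept (fun k => w k * T k ω) hci
        _ ≤ W := hω
    calc μ {ω | Y ω ≤ W} ≤ μ {ω | T a ω ≤ W ∧ T b ω ≤ W} :=
          measure_mono fun ω hω => ⟨hle ω hai ha hω, hle ω hbi hb hω⟩
      _ ≤ _ := measure_le_and_le_le_of_indepFun (hTmeas a) (hTmeas b) (hTindep.indepFun hab)
          (hTunif a) (hTunif b) W
  obtain ⟨hwi0, hwi1⟩ := hw i
  by_cases hwε : 2 * ε < w i
  · have hwpos : 0 < w i := by linarith
    calc _ ≤ ENNReal.ofReal (2 * ε / w i) * μ {ω | Y ω ≤ W} :=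
          measure_sandwich_le_of_indepFun (hTmeas i) hY hXY (hTunif i) hwi0
            (volume_restrict_Icc_sandwich_le hwpos _)
      _ ≤ ENNReal.ofReal (2 * ε / w i) * (ENNReal.ofReal W * ENNReal.ofReal W) := by gcongr
      _ = ENNReal.ofReal (2 * ε / w i * (W * W)) := by
          rw [ENNReal.ofReal_mul (by positivity), ENNReal.ofReal_mul (by positivity)]
      _ ≤ ENNReal.ofReal (8 * ε) := by
          refine ENNReal.ofReal_le_ofReal ?_
          have hW : W * W ≤ 4 * w i := by nlinarith
          rw [div_mul_eq_mul_div, div_le_iff₀ hwpos]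
          nlinarith
  · calc _ ≤ 1 * μ {ω | Y ω ≤ W} :=
          measure_sandwich_le_of_indepFun (hTmeas i) hY hXY (hTunif i) hwi0 fun _ => prob_le_one
      _ ≤ ENNReal.ofReal (W * W) := by rw [one_mul, ENNReal.ofReal_mul (by positivity)]; exact hYW
      _ ≤ ENNReal.ofReal (8 * ε) := ENNReal.ofReal_le_ofReal (by nlinarith)

end MaxExcept

/-- Let `n, f` be natural numbers with `f ≥ 1` and `n ≥ 3f + 1`, and `Q ∈ (0,1)` a
real.  Let `w_1, …, w_n ∈ [0,1]` with `w_i = 1` for all `i` in some set `S` of size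
at least `n - f`.  Let `T_1, …, T_n` be independent random variables, each uniform
on `[0,1]`, and set `X_i = w_i · T_i`.  If `r = 3 + ⌈log₂ n + log₂ (1/Q)⌉` and
`ε = 2^{-r}`, then the probability that there exist distinct indices `i ≠ j` with
`X_j = max_k X_k` and `X_i ≥ X_j - 2ε` is at most `Q`. -/
theorem near_maximum_prob_bound_rounds {Ω : Type*} [MeasurableSpace Ω] (μ : Measure Ω)
    [IsProbabilityMeasure μ] (n f : ℕ) (hf : 1 ≤ f) (hn : 3 * f + 1 ≤ n)
    (Q : ℝ) (hQ0 : 0 < Q) (hQ1 : Q < 1)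
    (w : Fin n → ℝ) (hw : ∀ i, w i ∈ Set.Icc (0 : ℝ) 1)
    (S : Finset (Fin n)) (hS : n - f ≤ S.card) (hSone : ∀ i ∈ S, w i = 1)
    (T : Fin n → Ω → ℝ) (hTmeas : ∀ i, Measurable (T i))
    (hTindep : iIndepFun T μ)
    (hTunif : ∀ i, μ.map (T i) = volume.restrict (Set.Icc (0 : ℝ) 1))
    (r : ℤ) (hr : r = 3 + ⌈Real.logb 2 n + Real.logb 2 (1 / Q)⌉)
    (ε : ℝ) (hεdef : ε = (2 : ℝ) ^ (-r)) :
    μ {ω | ∃ i j, i ≠ j ∧ (∀ k, w k * T k ω ≤ w j * T j ω) ∧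
        w j * T j ω - 2 * ε ≤ w i * T i ω}
      ≤ ENNReal.ofReal Q := by
  have hn0 : (0 : ℝ) < n := by exact_mod_cast (by omega : 0 < n)
  have h8nε : 8 * n * ε ≤ Q := hεdef ▸ hr ▸ eight_mul_mul_two_zpow_neg_le hn0 hQ0
  have hε0 : 0 < ε := hεdef ▸ zpow_pos two_pos _
  have hε : ε ≤ 1 / 2 := by nlinarith [(by exact_mod_cast (by omega : 1 ≤ n) : (1 : ℝ) ≤ n)]
  set G : Fin n → Set Ω := fun i =>
    {ω | maxExcept (fun k => w k * T k ω) i - 2 * ε ≤ w i * T i ω ∧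
      w i * T i ω ≤ maxExcept (fun k => w k * T k ω) i}
  have hG : ∀ i, μ (G i) ≤ ENNReal.ofReal (8 * ε) := fun i => by
    obtain ⟨a, ha, b, hb, hab⟩ := Finset.one_lt_card.mp
      (by have := Finset.pred_card_le_card_erase (s := S) (a := i); omega : 1 < (S.erase i).card)
    rw [Finset.mem_erase] at ha hb
    exact measure_sandwich_maxExcept_le hTmeas hTindep hTunif hw ha.1 hb.1 hab (hSone a ha.2)
      (hSone b hb.2) hε0 hε
  calc _ ≤ μ (⋃ i, G i) := measure_mono fun ω hω => mem_iUnion.mpr (exists_sandwich_maxExcept hω)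
    _ ≤ ∑ i, μ (G i) := measure_iUnion_fintype_le μ G
    _ ≤ ∑ _i : Fin n, ENNReal.ofReal (8 * ε) := Finset.sum_le_sum fun i _ => hG i
    _ = ENNReal.ofReal (n * (8 * ε)) := by
        rw [ENNReal.ofReal_mul hn0.le, ENNReal.ofReal_natCast]; simp
    _ ≤ ENNReal.ofReal Q := ENNReal.ofReal_le_ofReal (by linarith)
end

section
/- For all natural numbers n and m with 0 < m < n, and for every index i with 1 ≤ i ≤ C(n,m) − 1, the consecutive code words C_{n,m}[i−1] and C_{n,m}[i] differ in exactly two bit positions (their Hamming distance is 2). -/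
/-- The Gray-style code `C_{n,m}`: a list of binary strings (lists of Booleans,
`true` = 1, `false` = 0).  `C_{0,0}` is the one-element list containing the empty
string, `C_{n,0} = [0^n]`, `C_{n,n} = [1^n]` for `n > 0`, and for `0 < m < n`,
`C_{n,m}` is the concatenation of the list obtained by prepending `0` to every
string of `C_{n-1,m}` with the reverse of the list obtained by prepending `1` to
every string of `C_{n-1,m-1}`. -/
def grayCode : ℕ → ℕ → List (List Bool)
  | 0, _ => [[]]
  | n + 1, 0 => [List.replicate (n + 1) false]
  | n + 1, m + 1 =>
    if m + 1 = n + 1 then [List.replicate (n + 1) true]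
    else (grayCode n (m + 1)).map (List.cons false) ++
      ((grayCode n m).map (List.cons true)).reverse


/-- The Hamming distance between two (equal-length) binary strings: the number of
positions at which they differ. -/
def listHammingDist : List Bool → List Bool → ℕ
  | a :: as, b :: bs => (if a = b then 0 else 1) + listHammingDist as bs
  | _, _ => 0

/-!
`C_{n+1,m+1}` is `0·C_{n,m+1}` followed by the reversal of `1·C_{n,m}`, so by induction every
adjacent pair inside either block is at distance 2, and only the junction needs care. There the
words are `0` followed by the last word of `C_{n,m+1}` and `1` followed by the last word of
`C_{n,m}`. Since the reversed second block of `C_{n+1,k+1}` starts with the first word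
`0^{n-k} 1^k` of `C_{n,k}`, the last word of `C_{n+1,k+1}` is `1 0^{n-k} 1^k`; the two junction
words therefore differ in the leading bit and in exactly one further position.
-/

theorem listHammingDist_self : ∀ u : List Bool, listHammingDist u u = 0
  | [] => rfl
  | _ :: u => by simp [listHammingDist, listHammingDist_self u]

theorem listHammingDist_comm : ∀ u v : List Bool, listHammingDist u v = listHammingDist v u
  | [], [] | [], _ :: _ | _ :: _, [] => rfl
  | a :: u, b :: v => by
    simp only [listHammingDist, listHammingDist_comm u v, eq_comm (a := a)]

theorem listHammingDist_append :
    ∀ {u v : List Bool} (u' v' : List Bool), u.length = v.length →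
      listHammingDist (u ++ u') (v ++ v') = listHammingDist u v + listHammingDist u' v'
  | [], [], _, _, _ => by simp [listHammingDist]
  | a :: u, b :: v, u', v', h => by
    simp only [List.cons_append, listHammingDist,
      listHammingDist_append u' v' (Nat.succ_injective h), Nat.add_assoc]

theorem grayCode_zero_right (n : ℕ) : grayCode n 0 = [List.replicate n false] := by
  cases n <;> rfl

theorem grayCode_self (n : ℕ) : grayCode n n = [List.replicate n true] := by
  cases n <;> simp [grayCode]

theorem grayCode_succ_succ {n m : ℕ} (h : m < n) :
    grayCode (n + 1) (m + 1) = (grayCode n (m + 1)).map (List.cons false) ++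
      ((grayCode n m).map (List.cons true)).reverse := by
  rw [grayCode, if_neg (by omega)]

theorem grayCode_length : ∀ {n m : ℕ}, m ≤ n → (grayCode n m).length = n.choose m
  | n, 0, _ => by simp [grayCode_zero_right]
  | 0, _ + 1, h => by omega
  | n + 1, m + 1, h => by
    rcases (Nat.succ_le_succ_iff.mp h).lt_or_eq with h | rfl
    · rw [grayCode_succ_succ (by omega), Nat.choose_succ_succ', List.length_append,
        List.length_reverse, List.length_map, List.length_map, grayCode_length (by omega),
        grayCode_length (by omega), Nat.add_comm]
    · simp [grayCode_self]

theorem grayCode_head? : ∀ {n m : ℕ}, m ≤ n →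
    (grayCode n m).head? = some (List.replicate (n - m) false ++ List.replicate m true)
  | n, 0, _ => by simp [grayCode_zero_right]
  | 0, _ + 1, h => by omega
  | n + 1, m + 1, h => by
    rcases (Nat.succ_le_succ_iff.mp h).lt_or_eq with h | rfl
    · have hne : grayCode n (m + 1) ≠ [] := by
        rw [← List.length_pos_iff, grayCode_length (by omega)]
        exact Nat.choose_pos (by omega)
      rw [grayCode_succ_succ (by omega), List.head?_append_of_ne_nil _ (by simpa),
        List.head?_map, grayCode_head? (by omega)]
      simp [show n + 1 - (m + 1) = n - (m + 1) + 1 by omega, List.replicate_succ]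
    · simp [grayCode_self]

theorem grayCode_getLast? {n m : ℕ} (h : m ≤ n) :
    (grayCode (n + 1) (m + 1)).getLast? =
      some (true :: (List.replicate (n - m) false ++ List.replicate m true)) := by
  rcases h.lt_or_eq with h | rfl
  · rw [grayCode_succ_succ h, List.getLast?_append, List.getLast?_reverse, List.head?_map,
      grayCode_head? h.le]
    rfl
  · simp [grayCode_self, List.replicate_succ]

theorem listHammingDist_cons_grayCode_getLast? {n m : ℕ} (h : m < n) :
    ∀ x ∈ (grayCode n (m + 1)).getLast?, ∀ y ∈ (grayCode n m).getLast?,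
      listHammingDist (false :: x) (true :: y) = 2 := by
  obtain ⟨n, rfl⟩ : ∃ k, n = k + 1 := ⟨n - 1, by omega⟩
  rw [grayCode_getLast? (by omega)]
  rintro x ⟨⟩
  cases m with
  | zero =>
    rw [grayCode_zero_right, List.getLast?_singleton]
    rintro y ⟨⟩
    simp [listHammingDist, List.replicate_succ, listHammingDist_self]
  | succ m =>
    rw [grayCode_getLast? (by omega)]
    rintro y ⟨⟩
    have hsplit : List.replicate (n - m) false = List.replicate (n - (m + 1)) false ++ [false] := by
      rw [← List.replicate_succ', show n - (m + 1) + 1 = n - m by omega]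
    rw [hsplit, List.append_assoc, List.replicate_succ]
    simp [listHammingDist, listHammingDist_append, listHammingDist_self]

theorem grayCode_isChain_listHammingDist_eq_two :
    ∀ {n m : ℕ}, m ≤ n → (grayCode n m).IsChain (fun u v => listHammingDist u v = 2)
  | 0, _, _ => List.isChain_singleton _
  | n + 1, 0, _ => List.isChain_singleton _
  | n + 1, m + 1, h => by
    rcases (Nat.succ_le_succ_iff.mp h).lt_or_eq with h | rfl
    · rw [grayCode_succ_succ h, List.isChain_append, List.isChain_reverse, List.isChain_map,
        List.isChain_map, List.getLast?_map, List.head?_reverse, List.getLast?_map]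
      refine ⟨?_, ?_, ?_⟩
      · simpa [listHammingDist] using grayCode_isChain_listHammingDist_eq_two (m := m + 1) h
      · simpa [listHammingDist, listHammingDist_comm] using
          grayCode_isChain_listHammingDist_eq_two (m := m) h.le
      · simpa using listHammingDist_cons_grayCode_getLast? h
    · rw [grayCode_self]
      exact List.isChain_singleton _

theorem grayCode_consecutive_hamming_general (n m : ℕ) (hmn : m < n)
    (i : ℕ) (hi1 : 1 ≤ i) (hi2 : i ≤ n.choose m - 1) :
    listHammingDist ((grayCode n m).getD (i - 1) []) ((grayCode n m).getD i []) = 2 := by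
  have hlen := grayCode_length hmn.le
  obtain ⟨j, rfl⟩ : ∃ j, i = j + 1 := ⟨i - 1, by omega⟩
  rw [Nat.add_sub_cancel, List.getD_eq_getElem _ _ (by omega),
    List.getD_eq_getElem _ _ (by omega)]
  exact (grayCode_isChain_listHammingDist_eq_two hmn.le).getElem j (by omega)

/-- For all natural numbers `n` and `m` with `0 < m < n`, and for every index `i`
with `1 ≤ i ≤ C(n,m) - 1`, the consecutive code words `C_{n,m}[i-1]` and
`C_{n,m}[i]` differ in exactly two bit positions (Hamming distance `2`). -/
theorem grayCode_consecutive_hamming (n m : ℕ) (hm : 0 < m) (hmn : m < n)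
    (i : ℕ) (hi1 : 1 ≤ i) (hi2 : i ≤ n.choose m - 1) :
    listHammingDist ((grayCode n m).getD (i - 1) []) ((grayCode n m).getD i []) = 2 :=
  grayCode_consecutive_hamming_general n m hmn i hi1 hi2
end
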